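/- arXiv:1308.1060 — 2 statements merged into one kernel-verified Lean document; each statement's English description precedes it below -/
import Mathlib

section
/- For any n ≥ 2, real numbers a₁,…,aₙ with all a_i ≥ c > 0 (or with all a_i of the same sign and min|a_i| ≥ c), and for the function V(z) = Σᵢ |a_i||zⁱ|² on (ℝ²)ⁿ, the generator L of the rescaled vortex system satisfies LV(z) = 4ν Σᵢ |a_i| − V(z) at every z with pairwise distinct components, where LV(z) = ν Δ V(z) − (z/2)·∇V(z) + Σᵢ Σ_{j≠i} a_j K(zⁱ−zʲ)·∇_{zⁱ}V(z). -/
open Finset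

/-- The Biot and Savart kernel `K(x) = x^⊥ / (2π|x|²)` on `ℝ² \ {0}`. -/
noncomputable def biotSavart (x : EuclideanSpace ℝ (Fin 2)) : EuclideanSpace ℝ (Fin 2) :=
  (2 * Real.pi * ‖x‖ ^ 2)⁻¹ • (WithLp.equiv 2 (Fin 2 → ℝ)).symm ![-(x 1), x 0]

/-- Configuration space of `n` planar vortices. -/
abbrev Conf (n : ℕ) := Fin n → EuclideanSpace ℝ (Fin 2)

/-- Partial derivative of `f` at `z` in direction `d`. -/
noncomputable def pderiv {n : ℕ} (f : Conf n → ℝ) (d : Conf n) (z : Conf n) : ℝ :=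
  fderiv ℝ f z d

/-- Second partial derivative of `f` at `z` in direction `d` (twice). -/
noncomputable def pderiv2 {n : ℕ} (f : Conf n → ℝ) (d : Conf n) (z : Conf n) : ℝ :=
  fderiv ℝ (fun y => fderiv ℝ f y d) z d

/-- Unit direction moving the `k`-th coordinate of the `i`-th particle. -/
noncomputable def dir {n : ℕ} (i : Fin n) (k : Fin 2) : Conf n :=
  Function.update (0 : Conf n) i (EuclideanSpace.single k 1)

/-!
The gradient of `V` in `zⁱ` is `2|aᵢ| zⁱ` and `ΔV = 4 ∑ᵢ |aᵢ|`, so the diffusion and drift terms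
give `4ν ∑ᵢ |aᵢ| - V(z)`. The vortex interaction term vanishes: `K` is odd and `K(x) ⊥ x`, so when
`aⱼ |aᵢ| = aᵢ |aⱼ|` (this is where the common sign of the vorticities enters) the terms of the
ordered pairs `(i, j)` and `(j, i)` add up to a multiple of `⟪K(zⁱ - zʲ), zⁱ - zʲ⟫ = 0`.
-/

open scoped InnerProductSpace

theorem sum_sum_filter_ne_eq_zero_of_antisymm {ι M : Type*} [Fintype ι] [DecidableEq ι]
    [AddCommGroup M] [IsAddTorsionFree M] (f : ι → ι → M) (hf : ∀ i j, f j i = -f i j) :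
    ∑ i, ∑ j ∈ univ.filter (· ≠ i), f i j = 0 := by
  have hdiag : ∀ i, f i i = 0 := fun i => self_eq_neg.mp (hf i i)
  have hfull : ∑ i, ∑ j ∈ univ.filter (· ≠ i), f i j = ∑ i, ∑ j, f i j :=
    sum_congr rfl fun i _ => sum_filter_of_ne fun j _ hj => by rintro rfl; exact hj (hdiag j)
  rw [hfull, ← self_eq_neg, ← sum_neg_distrib, sum_comm]
  exact sum_congr rfl fun i _ => by
    rw [← sum_neg_distrib]; exact sum_congr rfl fun j _ => hf i j

theorem sum_coord_mul_eq_inner {ι : Type*} [Fintype ι] (x y : EuclideanSpace ℝ ι) :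
    ∑ k, x k * y k = ⟪x, y⟫_ℝ := by
  simp [PiLp.inner_apply, mul_comm]

theorem biotSavart_neg (x : EuclideanSpace ℝ (Fin 2)) : biotSavart (-x) = -biotSavart x := by
  ext k
  fin_cases k <;> simp [biotSavart]

theorem inner_biotSavart_self (x : EuclideanSpace ℝ (Fin 2)) : ⟪biotSavart x, x⟫_ℝ = 0 := by
  simp [biotSavart, PiLp.inner_apply, Fin.sum_univ_two]
  ring

theorem dir_apply_self {n : ℕ} (i : Fin n) (k : Fin 2) :
    dir i k i = EuclideanSpace.single k 1 := by
  simp [dir]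

theorem dir_apply_of_ne {n : ℕ} {i i' : Fin n} (h : i' ≠ i) (k : Fin 2) : dir i k i' = 0 := by
  simp [dir, h]

noncomputable def weightedNormSq {n : ℕ} (w : Fin n → ℝ) (y : Conf n) : ℝ :=
  ∑ i, w i * ‖y i‖ ^ 2

section weightedNormSq

variable {n : ℕ} (w : Fin n → ℝ)

theorem hasFDerivAt_weightedNormSq (y : Conf n) :
    HasFDerivAt (weightedNormSq w)
      (∑ i, w i • 2 • (innerSL ℝ (y i)).comp (ContinuousLinearMap.proj i)) y :=
  HasFDerivAt.fun_sum fun i _ => ((hasFDerivAt_apply i y).norm_sq).const_mul (w i)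

theorem pderiv_weightedNormSq (d y : Conf n) :
    pderiv (weightedNormSq w) d y = ∑ i, 2 * w i * ⟪y i, d i⟫_ℝ := by
  simp only [pderiv, (hasFDerivAt_weightedNormSq w y).fderiv, _root_.sum_apply, smul_apply,
    ContinuousLinearMap.comp_apply, ContinuousLinearMap.proj_apply, coe_innerSL_apply,
    nsmul_eq_mul, Nat.cast_ofNat, smul_eq_mul]
  exact sum_congr rfl fun i _ => by ring

theorem pderiv2_weightedNormSq (d y : Conf n) :
    pderiv2 (weightedNormSq w) d y = ∑ i, 2 * w i * ‖d i‖ ^ 2 := by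
  set L : Conf n →L[ℝ] ℝ := ∑ i, (2 * w i) • (innerSL ℝ (d i)).comp (ContinuousLinearMap.proj i)
  have hL : (fun y => fderiv ℝ (weightedNormSq w) y d) = L := by
    funext y
    change pderiv _ d y = L y
    simp [L, pderiv_weightedNormSq, real_inner_comm]
  simp [pderiv2, hL, L.fderiv, L]

theorem pderiv_weightedNormSq_dir (y : Conf n) (i : Fin n) (k : Fin 2) :
    pderiv (weightedNormSq w) (dir i k) y = 2 * w i * y i k := by
  rw [pderiv_weightedNormSq, sum_eq_single i (fun i' _ h => by simp [dir_apply_of_ne h])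
    (by simp), dir_apply_self, EuclideanSpace.inner_single_right]
  simp

theorem sum_mul_pderiv_weightedNormSq_dir (x : EuclideanSpace ℝ (Fin 2)) (y : Conf n)
    (i : Fin n) :
    ∑ k, x k * pderiv (weightedNormSq w) (dir i k) y = 2 * w i * ⟪x, y i⟫_ℝ := by
  simp only [pderiv_weightedNormSq_dir, mul_left_comm (x _), ← mul_sum, sum_coord_mul_eq_inner]

theorem pderiv2_weightedNormSq_dir (y : Conf n) (i : Fin n) (k : Fin 2) :
    pderiv2 (weightedNormSq w) (dir i k) y = 2 * w i := by
  rw [pderiv2_weightedNormSq, sum_eq_single i (fun i' _ h => by simp [dir_apply_of_ne h])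
    (by simp)]
  simp [dir_apply_self]

end weightedNormSq

theorem sum_sum_filter_ne_mul_inner_biotSavart_eq_zero {n : ℕ} (a w : Fin n → ℝ)
    (haw : ∀ i j, a j * w i = a i * w j) (z : Conf n) :
    ∑ i, ∑ j ∈ univ.filter (· ≠ i), a j * (2 * w i * ⟪biotSavart (z i - z j), z i⟫_ℝ) = 0 := by
  refine sum_sum_filter_ne_eq_zero_of_antisymm _ fun i j => ?_
  have hK : ⟪biotSavart (z i - z j), z i - z j⟫_ℝ = 0 := inner_biotSavart_self _
  rw [← neg_sub, biotSavart_neg, inner_neg_left]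
  rw [inner_sub_right] at hK
  linear_combination (2 * a i * w j) * hK + 2 * ⟪biotSavart (z i - z j), z i⟫_ℝ * haw i j

theorem mul_abs_eq_mul_abs_of_sameSign {n : ℕ} {a : Fin n → ℝ}
    (hsign : (∀ i, 0 < a i) ∨ (∀ i, a i < 0)) (i j : Fin n) : a j * |a i| = a i * |a j| := by
  rcases hsign with h | h
  · rw [abs_of_pos (h i), abs_of_pos (h j), mul_comm]
  · rw [abs_of_neg (h i), abs_of_neg (h j)]; ring

theorem generator_lyapunov_general (n : ℕ) (ν : ℝ) (a : Fin n → ℝ)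
    (hsign : (∀ i, 0 < a i) ∨ (∀ i, a i < 0))
    (z : Conf n)
    (V : Conf n → ℝ) (hV : V = fun y => ∑ i : Fin n, |a i| * ‖y i‖ ^ 2) :
    ν * (∑ i : Fin n, ∑ k : Fin 2, pderiv2 V (dir i k) z)
      - (1 / 2) * (∑ i : Fin n, ∑ k : Fin 2, z i k * pderiv V (dir i k) z)
      + (∑ i : Fin n, ∑ j ∈ univ.filter (· ≠ i),
          a j * ∑ k : Fin 2, biotSavart (z i - z j) k * pderiv V (dir i k) z)
    = 4 * ν * (∑ i : Fin n, |a i|) - V z := by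
  obtain rfl : V = weightedNormSq (fun i => |a i|) := hV
  simp only [pderiv2_weightedNormSq_dir, sum_mul_pderiv_weightedNormSq_dir,
    real_inner_self_eq_norm_sq]
  rw [sum_sum_filter_ne_mul_inner_biotSavart_eq_zero a _ (mul_abs_eq_mul_abs_of_sameSign hsign)]
  simp only [weightedNormSq, Fin.sum_univ_two, mul_sum, add_zero]
  congr 1 <;> exact sum_congr rfl fun i _ => by ring

/-- For vorticities of constant sign bounded away from zero, the generator of the
rescaled vortex system applied to `V(z) = ∑ᵢ |aᵢ| |zⁱ|²` satisfies
`L V(z) = 4ν ∑ᵢ |aᵢ| - V(z)` at every configuration with pairwise distinct components. -/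
theorem generator_lyapunov (n : ℕ) (hn : 2 ≤ n) (ν : ℝ) (hν : 0 < ν) (a : Fin n → ℝ)
    (c : ℝ) (hc : 0 < c) (hac : ∀ i, c ≤ |a i|)
    (hsign : (∀ i, 0 < a i) ∨ (∀ i, a i < 0))
    (z : Conf n) (hz : ∀ i j, i ≠ j → z i ≠ z j)
    (V : Conf n → ℝ) (hV : V = fun y => ∑ i : Fin n, |a i| * ‖y i‖ ^ 2) :
    ν * (∑ i : Fin n, ∑ k : Fin 2, pderiv2 V (dir i k) z)
      - (1 / 2) * (∑ i : Fin n, ∑ k : Fin 2, z i k * pderiv V (dir i k) z)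
      + (∑ i : Fin n, ∑ j ∈ univ.filter (· ≠ i),
          a j * ∑ k : Fin 2, biotSavart (z i - z j) k * pderiv V (dir i k) z)
    = 4 * ν * (∑ i : Fin n, |a i|) - V z :=
  generator_lyapunov_general n ν a hsign z V hV
end

section
/- Let p₀ and p_∞ be probability densities on ℝ^d with p_∞ > 0 and H(p₀|p_∞) = ∫ p₀ ln(p₀/p_∞) < ∞. For k ∈ ℕ*, set α_k = ∫ (p₀ ∧ k p_∞), p̃₀ᵏ = (p₀ ∧ k p_∞)/α_k and p₀ᵏ = α_k p̃₀ᵏ + (1−α_k) p_∞. Then α_k → 1 and H(p₀ᵏ|p_∞) → H(p₀|p_∞) as k → ∞. -/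
/-!
Where `α_k ≠ 0`, `p₀ᵏ = p₀ ∧ k p_∞ + (1 - α_k) p_∞`; this converges pointwise to `p₀`, and once
`|1 - α_k| ≤ 1` it is bounded in absolute value by `p₀ + p_∞`. For `c > 0` and `|t| ≤ a + c`,
`|t log (t / c)| ≤ c + (1 + log 2) a + |a log (a / c)|`, so the entropy densities of `p₀ᵏ` are
dominated by an integrable function and both limits follow from dominated convergence.
-/

open MeasureTheory Filter

namespace Real

lemma abs_mul_log_le_of_le {x y : ℝ} (hx : 0 ≤ x) (hxy : x ≤ y) (hy : 1 ≤ y) :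
    |x * log x| ≤ 1 + y * log y := by
  rcases hx.eq_or_lt with rfl | hx
  · simp only [zero_mul, abs_zero]
    linarith [mul_log_nonneg hy]
  rcases le_or_gt x 1 with hx1 | hx1
  · have := abs_log_mul_self_lt x hx hx1
    rw [mul_comm] at this
    linarith [mul_log_nonneg hy]
  · have hlog : 0 ≤ log x := log_nonneg hx1.le
    rw [abs_of_nonneg (mul_nonneg hx.le hlog)]
    linarith [mul_le_mul hxy (log_le_log hx hxy) hlog (by linarith)]

lemma log_one_add_le {u : ℝ} (hu : 0 ≤ u) : log (1 + u) ≤ log 2 + |log u| := by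
  rcases le_or_gt u 1 with hu1 | hu1
  · linarith [log_le_log (by linarith) (show 1 + u ≤ 2 by linarith), abs_nonneg (log u)]
  · calc log (1 + u) ≤ log (2 * u) := log_le_log (by linarith) (by linarith)
      _ = log 2 + log u := log_mul two_ne_zero (by linarith)
      _ ≤ log 2 + |log u| := by gcongr; exact le_abs_self _

lemma abs_mul_log_div_le {a c t : ℝ} (ha : 0 ≤ a) (hc : 0 < c) (ht : |t| ≤ a + c) :
    |t * log (t / c)| ≤ c + (1 + log 2) * a + |a * log (a / c)| := by
  have hu : 0 ≤ a / c := by positivity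
  have hlog_abs : log (t / c) = log (|t| / c) := by
    rw [← log_abs, abs_div, abs_of_pos hc]
  have hx : |t| / c ≤ 1 + a / c := by
    rw [div_le_iff₀ hc, add_mul, div_mul_cancel₀ _ hc.ne']; linarith
  calc |t * log (t / c)| = c * |(|t| / c) * log (|t| / c)| := by
        rw [hlog_abs, abs_mul, abs_mul, abs_div, abs_abs, abs_of_pos hc]
        field_simp
    _ ≤ c * (1 + (1 + a / c) * log (1 + a / c)) := by
        gcongr
        exact abs_mul_log_le_of_le (by positivity) hx (by linarith)
    _ = c + a * log (1 + a / c) + c * log (1 + a / c) := by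
        field_simp
        ring
    _ ≤ c + a * (log 2 + |log (a / c)|) + c * (a / c) := by
        gcongr
        · exact log_one_add_le hu
        · linarith [log_le_sub_one_of_pos (show 0 < 1 + a / c by linarith)]
    _ = c + (1 + log 2) * a + |a * log (a / c)| := by
        rw [abs_mul, abs_of_nonneg ha, mul_div_cancel₀ _ hc.ne']
        ring

lemma continuous_mul_log_div {c : ℝ} (hc : c ≠ 0) : Continuous fun t ↦ t * log (t / c) := by
  convert (continuous_mul_log.comp (continuous_id.div_const c)).const_mul c using 2 with t
  simp only [Function.comp_apply, id]
  field_simp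

end Real

open Real Topology

lemma tendsto_min_natCast_mul (a : ℝ) {c : ℝ} (hc : 0 < c) :
    Tendsto (fun k : ℕ ↦ min a (k * c)) atTop (𝓝 a) :=
  tendsto_const_nhds.congr' <|
    ((tendsto_natCast_atTop_atTop.atTop_mul_const hc).eventually_ge_atTop a).mono
      fun _ hk ↦ (min_eq_left hk).symm

variable {α ι : Type*} [MeasurableSpace α] {μ : Measure α} {p q : α → ℝ}

theorem tendsto_integral_min_natCast_mul (hp : Integrable p μ) (hq : AEStronglyMeasurable q μ)
    (hq_pos : ∀ᵐ z ∂μ, 0 < q z) :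
    Tendsto (fun k : ℕ ↦ ∫ z, min (p z) (k * q z) ∂μ) atTop (𝓝 (∫ z, p z ∂μ)) := by
  refine tendsto_integral_of_dominated_convergence (fun z ↦ |p z|)
    (fun k ↦ hp.1.inf (hq.const_mul _)) hp.abs (fun k ↦ ?_) ?_
  · filter_upwards [hq_pos] with z hz
    rcases le_total (p z) (k * q z) with h | h
    · rw [min_eq_left h]; rfl
    · rw [min_eq_right h, norm_of_nonneg (by positivity)]
      exact h.trans (le_abs_self _)
  · filter_upwards [hq_pos] with z hz using tendsto_min_natCast_mul (p z) hz

theorem tendsto_integral_mul_log_div {l : Filter ι} [l.IsCountablyGenerated] {F : ι → α → ℝ}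
    (hF : ∀ n, AEMeasurable (F n) μ) (hq : AEMeasurable q μ)
    (hp_nonneg : ∀ᵐ z ∂μ, 0 ≤ p z) (hq_pos : ∀ᵐ z ∂μ, 0 < q z)
    (hp : Integrable p μ) (hq_int : Integrable q μ)
    (hent : Integrable (fun z ↦ p z * log (p z / q z)) μ)
    (hF_le : ∀ᶠ n in l, ∀ᵐ z ∂μ, |F n z| ≤ p z + q z)
    (hF_lim : ∀ᵐ z ∂μ, Tendsto (F · z) l (𝓝 (p z))) :
    Tendsto (fun n ↦ ∫ z, F n z * log (F n z / q z) ∂μ) l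
      (𝓝 (∫ z, p z * log (p z / q z) ∂μ)) := by
  refine tendsto_integral_filter_of_dominated_convergence
    (fun z ↦ q z + (1 + log 2) * p z + |p z * log (p z / q z)|)
    (.of_forall fun n ↦
      ((hF n).mul (measurable_log.comp_aemeasurable ((hF n).div hq))).aestronglyMeasurable)
    ?_ ((hq_int.add (hp.const_mul _)).add hent.abs) ?_
  · filter_upwards [hF_le] with n hn
    filter_upwards [hn, hp_nonneg, hq_pos] with z hz hpz hqz
    exact abs_mul_log_div_le hpz hqz hz
  · filter_upwards [hF_lim, hq_pos] with z hz hqz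
    exact ((continuous_mul_log_div hqz.ne').tendsto _).comp hz

/-- Approximation of the initial density: with `α_k = ∫ p₀ ∧ k p_∞`,
`p̃₀ᵏ = (p₀ ∧ k p_∞)/α_k` and `p₀ᵏ = α_k p̃₀ᵏ + (1-α_k) p_∞`, one has `α_k → 1` and
`H(p₀ᵏ|p_∞) → H(p₀|p_∞)` as `k → ∞`. -/
theorem entropy_approximation (d : ℕ) (p₀ pinf : EuclideanSpace ℝ (Fin d) → ℝ)
    (hp₀meas : Measurable p₀) (hp₀nonneg : ∀ z, 0 ≤ p₀ z) (hp₀prob : ∫ z, p₀ z = 1)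
    (hpinfmeas : Measurable pinf) (hpinfpos : ∀ z, 0 < pinf z) (hpinfprob : ∫ z, pinf z = 1)
    (hent : Integrable (fun z => p₀ z * Real.log (p₀ z / pinf z)))
    (αk : ℕ → ℝ) (hαk : ∀ k : ℕ, αk k = ∫ z, min (p₀ z) (k * pinf z))
    (ptilde : ℕ → EuclideanSpace ℝ (Fin d) → ℝ)
    (hptilde : ∀ (k : ℕ) z, ptilde k z = min (p₀ z) (k * pinf z) / αk k)
    (pk : ℕ → EuclideanSpace ℝ (Fin d) → ℝ)
    (hpk : ∀ (k : ℕ) z, pk k z = αk k * ptilde k z + (1 - αk k) * pinf z) :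
    Tendsto αk atTop (nhds 1) ∧
      Tendsto (fun k : ℕ => ∫ z, pk k z * Real.log (pk k z / pinf z)) atTop
        (nhds (∫ z, p₀ z * Real.log (p₀ z / pinf z))) := by
  have hp₀int : Integrable p₀ := .of_integral_ne_zero (by simp [hp₀prob])
  have hpinfint : Integrable pinf := .of_integral_ne_zero (by simp [hpinfprob])
  have hα : Tendsto αk atTop (𝓝 1) := by
    simpa only [← hαk, hp₀prob] using
      tendsto_integral_min_natCast_mul hp₀int hpinfmeas.aestronglyMeasurable (.of_forall hpinfpos)
  refine ⟨hα, ?_⟩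
  -- `ptilde k` is junk where `αk k = 0` (e.g. `k = 0`), so `pk k` is only eventually explicit
  have hpk_eq : ∀ᶠ k in atTop, pk k = fun z ↦ min (p₀ z) (k * pinf z) + (1 - αk k) * pinf z := by
    filter_upwards [hα.eventually_ne one_ne_zero] with k hk
    funext z
    rw [hpk, hptilde, mul_div_cancel₀ _ hk]
  have hα_near : ∀ᶠ k in atTop, αk k ∈ Set.Icc (0 : ℝ) 2 :=
    hα.eventually (Icc_mem_nhds (by norm_num) (by norm_num))
  refine (tendsto_integral_mul_log_div
    (F := fun (k : ℕ) z ↦ min (p₀ z) (k * pinf z) + (1 - αk k) * pinf z)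
    (fun k ↦ by fun_prop) hpinfmeas.aemeasurable (.of_forall hp₀nonneg) (.of_forall hpinfpos)
    hp₀int hpinfint hent ?_ ?_).congr'
    (hpk_eq.mono fun k hk ↦ by simp only [hk])
  · filter_upwards [hα_near] with k ⟨hk0, hk2⟩
    refine .of_forall fun z ↦ ?_
    have hmin : |min (p₀ z) (k * pinf z)| ≤ p₀ z := by
      rw [abs_of_nonneg (le_min (hp₀nonneg z) (by positivity [hpinfpos z]))]
      exact min_le_left _ _
    have hε : |1 - αk k| ≤ 1 := abs_le.2 ⟨by linarith, by linarith⟩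
    calc |min (p₀ z) (k * pinf z) + (1 - αk k) * pinf z|
        ≤ |min (p₀ z) (k * pinf z)| + |1 - αk k| * pinf z :=
          (abs_add_le _ _).trans_eq (by rw [abs_mul, abs_of_pos (hpinfpos z)])
      _ ≤ p₀ z + pinf z := by nlinarith [hpinfpos z]
  · refine .of_forall fun z ↦ ?_
    simpa using (tendsto_min_natCast_mul (p₀ z) (hpinfpos z)).add
      (((tendsto_const_nhds (x := (1 : ℝ))).sub hα).mul_const (pinf z))
end
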